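/- For m, n ≥ 4, every connected dominating set S of the n × m grid satisfies |S| ≥ ⌈mn/3⌉; that is, γ_c(G_{n,m}) ≥ ⌈mn/3⌉. -/

import Mathlib

/-!
Let `N[S]` be the closed neighbourhood of `S` in the infinite grid `ℤ²`. Double counting
`∑_{w ∈ N[S]} |N[w] ∩ S| = 5|S|`, where each `w ∈ S` contributes `1 + deg w` with
`∑ deg ≥ 2(|S| - 1)` because `G[S]` is connected, and every other `w ∈ N[S]` contributes at
least `1`, gives `|N[S]| ≤ 3|S| + 2`. On the other hand `N[S]` contains the whole grid and, since
the corners `(1, 1)` and `(n, m)` are dominated, a vertex outside the grid next to each of them;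
so `mn + 2 ≤ |N[S]|`, i.e. `mn ≤ 3|S|`. The grid itself is a connected dominating set, so the
infimum defining `connDomNum` is attained and the bound carries over to it.
-/

open Finset

/-- The infinite grid graph on `ℤ × ℤ`: two points are adjacent iff their
Manhattan distance is `1`. -/
def GridZ : SimpleGraph (ℤ × ℤ) where
  Adj u v := |u.1 - v.1| + |u.2 - v.2| = 1
  symm := by
    constructor
    intro u v h
    rw [abs_sub_comm v.1 u.1, abs_sub_comm v.2 u.2]
    exact h
  loopless := by
    constructor
    intro u h
    simp at h

/-- The vertex set `[1,n] × [1,m]` of the `n × m` grid graph `G_{n,m}`. -/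
def box (n m : ℕ) : Set (ℤ × ℤ) :=
  {p | 1 ≤ p.1 ∧ p.1 ≤ (n : ℤ) ∧ 1 ≤ p.2 ∧ p.2 ≤ (m : ℤ)}

instance (n m : ℕ) (p : ℤ × ℤ) : Decidable (p ∈ box n m) :=
  inferInstanceAs (Decidable (1 ≤ p.1 ∧ p.1 ≤ (n : ℤ) ∧ 1 ≤ p.2 ∧ p.2 ≤ (m : ℤ)))

/-- `S` is a connected dominating set of the grid `G_{n,m}`:
`S ⊆ [1,n] × [1,m]`, the induced subgraph on `S` is connected, and every
vertex of the grid is in `S` or adjacent to a vertex of `S`. -/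
def IsCDS (n m : ℕ) (S : Finset (ℤ × ℤ)) : Prop :=
  (S : Set (ℤ × ℤ)) ⊆ box n m ∧
    (GridZ.induce (S : Set (ℤ × ℤ))).Connected ∧
    ∀ v ∈ box n m, ∃ u ∈ S, u = v ∨ GridZ.Adj u v

/-- The closed neighbourhood of a vertex in the (enlarged) grid. -/
def closedNbr (v : ℤ × ℤ) : Finset (ℤ × ℤ) :=
  {v, (v.1 + 1, v.2), (v.1 - 1, v.2), (v.1, v.2 + 1), (v.1, v.2 - 1)}

/-- The closed neighbourhood `N_{G'}[S]` of `S` in the enlarged grid `G'`. -/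
def closedN (S : Finset (ℤ × ℤ)) : Finset (ℤ × ℤ) :=
  S.biUnion closedNbr

/-- The loss function `ℓ(S) = Σ_{v ∈ N_{G'}[S]} (|N_{G'}[v] ∩ S| - 1)`. -/
def loss (S : Finset (ℤ × ℤ)) : ℕ :=
  ∑ v ∈ closedN S, ((closedNbr v ∩ S).card - 1)

/-- The boundary of `G_{n,m}`: vertices of the grid with degree at most 3. -/
def boundary (n m : ℕ) : Set (ℤ × ℤ) :=
  {p | p ∈ box n m ∧ (((closedNbr p).erase p).filter (· ∈ box n m)).card ≤ 3}

instance (n m : ℕ) (p : ℤ × ℤ) : Decidable (p ∈ boundary n m) :=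
  inferInstanceAs
    (Decidable (p ∈ box n m ∧ (((closedNbr p).erase p).filter (· ∈ box n m)).card ≤ 3))

/-- The excess `e(S)`: the number of points of `S` on the boundary of the grid. -/
def excess (n m : ℕ) (S : Finset (ℤ × ℤ)) : ℕ :=
  (S.filter (fun p => p ∈ boundary n m)).card

/-- The four corners of `G_{n,m}`. -/
def corners (n m : ℕ) : Set (ℤ × ℤ) :=
  {((1 : ℤ), (1 : ℤ)), ((1 : ℤ), (m : ℤ)), ((n : ℤ), (1 : ℤ)), ((n : ℤ), (m : ℤ))}

/-- The degree of a vertex `v` in the induced subgraph `G[S]`. -/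
def degS (S : Finset (ℤ × ℤ)) (v : ℤ × ℤ) : ℕ :=
  (((closedNbr v).erase v) ∩ S).card

/-- The number of leaves (degree-1 vertices) of `G[S]`. -/
def numLeaves (S : Finset (ℤ × ℤ)) : ℕ := (S.filter (fun v => degS S v = 1)).card

/-- The number of degree-3 vertices of `G[S]`. -/
def numDeg3 (S : Finset (ℤ × ℤ)) : ℕ := (S.filter (fun v => degS S v = 3)).card

/-- The number of degree-4 vertices of `G[S]`. -/
def numDeg4 (S : Finset (ℤ × ℤ)) : ℕ := (S.filter (fun v => degS S v = 4)).card

/-- A bend: a degree-2 vertex of `G[S]` having one vertical and one horizontal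
neighbour in `S`. -/
def IsBend (S : Finset (ℤ × ℤ)) (v : ℤ × ℤ) : Prop :=
  degS S v = 2 ∧ ((v.1 + 1, v.2) ∈ S ∨ (v.1 - 1, v.2) ∈ S) ∧
    ((v.1, v.2 + 1) ∈ S ∨ (v.1, v.2 - 1) ∈ S)

instance (S : Finset (ℤ × ℤ)) (v : ℤ × ℤ) : Decidable (IsBend S v) :=
  inferInstanceAs (Decidable (_ ∧ _ ∧ _))

/-- The number of bends of `G[S]`. -/
def numBends (S : Finset (ℤ × ℤ)) : ℕ := (S.filter (fun v => IsBend S v)).card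

/-- The connected domination number `γ_c(G_{n,m})`. -/
noncomputable def connDomNum (n m : ℕ) : ℕ :=
  sInf {k | ∃ S : Finset (ℤ × ℤ), IsCDS n m S ∧ S.card = k}

/-- A maximal horizontal line segment of `G[S]`: the vertices `(i,a),…,(i,b)`
all lie in `S`, and the segment cannot be extended in row `i`. -/
def IsMaxHSeg (S : Finset (ℤ × ℤ)) (i a b : ℤ) : Prop :=
  a ≤ b ∧ (∀ j, a ≤ j → j ≤ b → (i, j) ∈ S) ∧ (i, a - 1) ∉ S ∧ (i, b + 1) ∉ S

/-- A maximal vertical line segment of `G[S]`: the vertices `(a,j),…,(b,j)`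
all lie in `S`, and the segment cannot be extended in column `j`. -/
def IsMaxVSeg (S : Finset (ℤ × ℤ)) (j a b : ℤ) : Prop :=
  a ≤ b ∧ (∀ i, a ≤ i → i ≤ b → (i, j) ∈ S) ∧ (a - 1, j) ∉ S ∧ (b + 1, j) ∉ S

namespace SimpleGraph

variable {V : Type*} {G : SimpleGraph V}

theorem reachable_of_exists_adj_lt (f : V → ℕ) {r : V}
    (h : ∀ v, v ≠ r → ∃ w, G.Adj w v ∧ f w < f v) (v : V) : G.Reachable r v := by
  induction hv : f v using Nat.strong_induction_on generalizing v with
  | _ k ih =>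
    by_cases hvr : v = r
    · exact hvr ▸ Reachable.refl v
    obtain ⟨w, hwv, hlt⟩ := h v hvr
    exact (ih _ (hv ▸ hlt) w rfl).trans hwv.reachable

theorem Connected.two_mul_card_sub_one_le_sum_degree [Fintype V] [DecidableRel G.Adj]
    (h : G.Connected) : 2 * (Fintype.card V - 1) ≤ ∑ v, G.degree v := by
  have hedges := h.card_vert_le_card_edgeSet_add_one
  rw [Nat.card_eq_fintype_card, Nat.card_eq_fintype_card, ← edgeFinset_card] at hedges
  rw [sum_degrees_eq_twice_card_edges]
  omega

end SimpleGraph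

open SimpleGraph

section ClosedNbr

theorem mem_closedNbr_iff {u v : ℤ × ℤ} :
    u ∈ closedNbr v ↔ |u.1 - v.1| + |u.2 - v.2| ≤ 1 := by
  simp only [closedNbr, mem_insert, mem_singleton, Prod.ext_iff]
  rcases abs_cases (u.1 - v.1) with ⟨h1, _⟩ | ⟨h1, _⟩ <;>
    rcases abs_cases (u.2 - v.2) with ⟨h2, _⟩ | ⟨h2, _⟩ <;>
      rw [h1, h2] <;> omega

theorem mem_closedNbr_comm {u v : ℤ × ℤ} : u ∈ closedNbr v ↔ v ∈ closedNbr u := by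
  rw [mem_closedNbr_iff, mem_closedNbr_iff, abs_sub_comm u.1, abs_sub_comm u.2]

theorem self_mem_closedNbr (v : ℤ × ℤ) : v ∈ closedNbr v := by
  simp [closedNbr]

theorem card_closedNbr (v : ℤ × ℤ) : #(closedNbr v) = 5 := by
  simp only [closedNbr]
  repeat rw [card_insert_of_notMem (by simp only [mem_insert, mem_singleton, Prod.ext_iff]; omega)]
  rfl

theorem gridZ_adj_iff {u v : ℤ × ℤ} : GridZ.Adj u v ↔ v ∈ closedNbr u ∧ v ≠ u := by
  change |u.1 - v.1| + |u.2 - v.2| = 1 ↔ _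
  rw [mem_closedNbr_iff, ne_eq, Prod.ext_iff, abs_sub_comm u.1, abs_sub_comm u.2]
  rcases abs_cases (v.1 - u.1) with ⟨h1, _⟩ | ⟨h1, _⟩ <;>
    rcases abs_cases (v.2 - u.2) with ⟨h2, _⟩ | ⟨h2, _⟩ <;>
      rw [h1, h2] <;> omega

theorem closedNbr_subset_closedN {S : Finset (ℤ × ℤ)} {u : ℤ × ℤ} (hu : u ∈ S) :
    closedNbr u ⊆ closedN S :=
  subset_biUnion_of_mem closedNbr hu

end ClosedNbr

instance : DecidableRel GridZ.Adj := fun u v =>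
  inferInstanceAs (Decidable (|u.1 - v.1| + |u.2 - v.2| = 1))

section Counting

variable (S : Finset (ℤ × ℤ))

theorem degree_induce_eq_degS (v : (S : Set (ℤ × ℤ))) :
    (GridZ.induce (S : Set (ℤ × ℤ))).degree v = degS S v := by
  rw [← card_neighborFinset_eq_degree, degS]
  refine card_bij (fun u _ => u.1) (fun u hu => ?_) (fun _ _ _ _ => Subtype.ext) fun w hw => ?_
  · have hadj : GridZ.Adj v u := (mem_neighborFinset (GridZ.induce _) v u).1 hu
    obtain ⟨hmem, hne⟩ := gridZ_adj_iff.1 hadj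
    exact mem_inter.2 ⟨mem_erase.2 ⟨hne, hmem⟩, u.2⟩
  · obtain ⟨⟨hne, hmem⟩, hwS⟩ := mem_inter.1 hw |>.imp_left mem_erase.1
    exact ⟨⟨w, hwS⟩, (mem_neighborFinset _ _ _).2 (gridZ_adj_iff.2 ⟨hmem, hne⟩), rfl⟩

theorem two_mul_card_sub_one_le_sum_degS (hS : (GridZ.induce (S : Set (ℤ × ℤ))).Connected) :
    2 * (#S - 1) ≤ ∑ v ∈ S, degS S v := by
  have h := hS.two_mul_card_sub_one_le_sum_degree
  have hcard : Fintype.card (S : Set (ℤ × ℤ)) = #S := Fintype.card_coe S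
  rw [hcard] at h
  exact h.trans_eq ((Fintype.sum_congr _ _ (degree_induce_eq_degS S)).trans
    (sum_finset_coe (degS S) S))

theorem sum_card_closedNbr_inter : ∑ w ∈ closedN S, #(closedNbr w ∩ S) = 5 * #S := by
  calc ∑ w ∈ closedN S, #(closedNbr w ∩ S)
      = ∑ w ∈ closedN S, ∑ u ∈ S, if w ∈ closedNbr u then 1 else 0 := by
        refine sum_congr rfl fun w _ => ?_
        rw [sum_boole, Nat.cast_id, inter_comm, ← filter_mem_eq_inter]
        simp only [mem_closedNbr_comm]
    _ = ∑ u ∈ S, #(closedNbr u) := by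
        rw [sum_comm]
        refine sum_congr rfl fun u hu => ?_
        rw [sum_boole, Nat.cast_id, filter_mem_eq_inter,
          inter_eq_right.2 (closedNbr_subset_closedN hu)]
    _ = 5 * #S := by simp [card_closedNbr, mul_comm]

theorem card_closedNbr_inter_eq_degS_add_one {w : ℤ × ℤ} (hw : w ∈ S) :
    #(closedNbr w ∩ S) = degS S w + 1 := by
  have hmem : w ∈ closedNbr w ∩ S := mem_inter.2 ⟨self_mem_closedNbr w, hw⟩
  rw [degS, erase_inter, card_erase_add_one hmem]

theorem one_le_card_closedNbr_inter {w : ℤ × ℤ} (hw : w ∈ closedN S) :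
    1 ≤ #(closedNbr w ∩ S) := by
  obtain ⟨u, huS, hwu⟩ := mem_biUnion.1 hw
  exact card_pos.2 ⟨u, mem_inter.2 ⟨mem_closedNbr_comm.1 hwu, huS⟩⟩

theorem card_closedN_le (hS : (GridZ.induce (S : Set (ℤ × ℤ))).Connected) :
    #(closedN S) ≤ 3 * #S + 2 := by
  have hSN : S ⊆ closedN S := fun u hu => closedNbr_subset_closedN hu (self_mem_closedNbr u)
  have hin : ∑ w ∈ S, #(closedNbr w ∩ S) = ∑ w ∈ S, degS S w + #S := by
    rw [sum_congr rfl fun w hw => card_closedNbr_inter_eq_degS_add_one S hw, sum_add_distrib,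
      sum_const, smul_eq_mul, mul_one]
  have hout : #(closedN S \ S) ≤ ∑ w ∈ closedN S \ S, #(closedNbr w ∩ S) := by
    simpa using card_nsmul_le_sum _ _ 1 fun w hw =>
      one_le_card_closedNbr_inter S (mem_sdiff.1 hw).1
  have htotal := sum_card_closedNbr_inter S
  rw [← sum_sdiff hSN, hin] at htotal
  have := two_mul_card_sub_one_le_sum_degS S hS
  have := card_sdiff_add_card_eq_card hSN
  omega

end Counting

section Box

variable {n m : ℕ} {S : Finset (ℤ × ℤ)}

noncomputable def boxFinset (n m : ℕ) : Finset (ℤ × ℤ) := Icc (1 : ℤ) n ×ˢ Icc (1 : ℤ) m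

theorem mem_boxFinset {p : ℤ × ℤ} : p ∈ boxFinset n m ↔ p ∈ box n m := by
  simp only [boxFinset, mem_product, mem_Icc, _root_.box, Set.mem_ofPred_eq, and_assoc]

theorem coe_boxFinset (n m : ℕ) : (boxFinset n m : Set (ℤ × ℤ)) = box n m :=
  Set.ext fun _ => mem_boxFinset

theorem card_boxFinset (n m : ℕ) : #(boxFinset n m) = m * n := by
  simp [boxFinset, mul_comm]

theorem connected_induce_box (hn : 1 ≤ n) (hm : 1 ≤ m) : (GridZ.induce (box n m)).Connected := by
  have hroot : ((1 : ℤ), (1 : ℤ)) ∈ box n m := ⟨le_rfl, by omega, le_rfl, by omega⟩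
  have : Nonempty (box n m) := ⟨⟨_, hroot⟩⟩
  have hreach : ∀ v, (GridZ.induce (box n m)).Reachable ⟨_, hroot⟩ v := by
    refine reachable_of_exists_adj_lt (fun v => (v.1.1 + v.1.2).toNat) ?_
    rintro ⟨⟨x, y⟩, hx1, hxn, hy1, hym⟩ hne
    by_cases hx : 1 < x
    · refine ⟨⟨(x - 1, y), by omega, by omega, hy1, hym⟩, ?_, by dsimp only; omega⟩
      change |x - 1 - x| + |y - y| = 1
      simp
    · have hy : 1 < y := by
        by_contra
        exact hne (Subtype.ext (Prod.ext (show x = 1 by omega) (show y = 1 by omega)))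
      refine ⟨⟨(x, y - 1), hx1, hxn, by omega, by omega⟩, ?_, by dsimp only; omega⟩
      change |x - x| + |y - 1 - y| = 1
      simp
  exact ⟨fun u v => (hreach u).symm.trans (hreach v)⟩

theorem boxFinset_isCDS (hn : 1 ≤ n) (hm : 1 ≤ m) : IsCDS n m (boxFinset n m) := by
  rw [IsCDS, coe_boxFinset]
  exact ⟨subset_rfl, connected_induce_box hn hm,
    fun v hv => ⟨v, mem_boxFinset.2 hv, Or.inl rfl⟩⟩

theorem IsCDS.exists_mem_closedNbr (hS : IsCDS n m S) {v : ℤ × ℤ} (hv : v ∈ box n m) :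
    ∃ u ∈ S, v ∈ closedNbr u := by
  obtain ⟨u, huS, rfl | hadj⟩ := hS.2.2 v hv
  · exact ⟨u, huS, self_mem_closedNbr u⟩
  · exact ⟨u, huS, (gridZ_adj_iff.1 hadj).1⟩

theorem IsCDS.box_subset_closedN (hS : IsCDS n m S) : boxFinset n m ⊆ closedN S := by
  intro v hv
  obtain ⟨u, huS, hvu⟩ := hS.exists_mem_closedNbr (mem_boxFinset.1 hv)
  exact closedNbr_subset_closedN huS hvu

theorem IsCDS.exists_mem_closedN_below (hS : IsCDS n m S) (hn : 1 ≤ n) (hm : 1 ≤ m) :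
    ∃ p ∈ closedN S, p ∉ box n m ∧ p.1 + p.2 ≤ 2 := by
  obtain ⟨u, huS, hcu⟩ :=
    hS.exists_mem_closedNbr (v := (1, 1)) ⟨le_rfl, by omega, le_rfl, by omega⟩
  obtain ⟨hu1, -, hu2, -⟩ := hS.1 huS
  simp only [closedNbr, mem_insert, mem_singleton, Prod.ext_iff] at hcu
  by_cases h : u.1 = 1
  · exact ⟨(u.1 - 1, u.2), closedNbr_subset_closedN huS (by simp [closedNbr]),
      fun hp => by have := hp.1; omega, by omega⟩
  · exact ⟨(u.1, u.2 - 1), closedNbr_subset_closedN huS (by simp [closedNbr]),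
      fun hp => by have := hp.2.2.1; omega, by omega⟩

theorem IsCDS.exists_mem_closedN_above (hS : IsCDS n m S) (hn : 1 ≤ n) (hm : 1 ≤ m) :
    ∃ p ∈ closedN S, p ∉ box n m ∧ (n + m : ℤ) ≤ p.1 + p.2 := by
  obtain ⟨u, huS, hcu⟩ :=
    hS.exists_mem_closedNbr (v := (n, m)) ⟨by omega, le_rfl, by omega, le_rfl⟩
  obtain ⟨-, hu1, -, hu2⟩ := hS.1 huS
  simp only [closedNbr, mem_insert, mem_singleton, Prod.ext_iff] at hcu
  by_cases h : u.1 = n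
  · exact ⟨(u.1 + 1, u.2), closedNbr_subset_closedN huS (by simp [closedNbr]),
      fun hp => by have := hp.2.1; omega, by omega⟩
  · exact ⟨(u.1, u.2 + 1), closedNbr_subset_closedN huS (by simp [closedNbr]),
      fun hp => by have := hp.2.2.2; omega, by omega⟩

theorem IsCDS.mul_le_three_mul_card (hS : IsCDS n m S) (hn : 1 ≤ n) (hm : 1 ≤ m)
    (hnm : 3 ≤ n + m) : m * n ≤ 3 * #S := by
  obtain ⟨p, hpN, hpbox, hp⟩ := hS.exists_mem_closedN_below hn hm
  obtain ⟨q, hqN, hqbox, hq⟩ := hS.exists_mem_closedN_above hn hm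
  have hpq : p ≠ q := by
    rintro rfl
    omega
  have hcard : #(insert p (insert q (boxFinset n m))) = m * n + 2 := by
    rw [card_insert_of_notMem, card_insert_of_notMem (mt mem_boxFinset.1 hqbox), card_boxFinset]
    simpa [hpq] using mt mem_boxFinset.1 hpbox
  have hsub : insert p (insert q (boxFinset n m)) ⊆ closedN S :=
    insert_subset hpN (insert_subset hqN hS.box_subset_closedN)
  have := card_le_card hsub
  have := card_closedN_le S hS.2.1
  omega

end Box

/-- Bound 1. For `m, n ≥ 4`, every connected dominating set of
`G_{n,m}` has size at least `⌈mn/3⌉`; hence `γ_c(G_{n,m}) ≥ ⌈mn/3⌉`. -/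
theorem cds_card_ge_ceil_third (n m : ℕ) (hn : 4 ≤ n) (hm : 4 ≤ m) :
    (∀ S : Finset (ℤ × ℤ), IsCDS n m S → (m * n + 2) / 3 ≤ S.card) ∧
      (m * n + 2) / 3 ≤ connDomNum n m := by
  have hbound : ∀ S : Finset (ℤ × ℤ), IsCDS n m S → (m * n + 2) / 3 ≤ S.card := fun S hS => by
    have := hS.mul_le_three_mul_card (by omega) (by omega) (by omega)
    omega
  refine ⟨hbound, ?_⟩
  obtain ⟨S, hS, hcard⟩ := Nat.sInf_mem
    (⟨_, boxFinset n m, boxFinset_isCDS (by omega) (by omega), rfl⟩ :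
      {k | ∃ S : Finset (ℤ × ℤ), IsCDS n m S ∧ S.card = k}.Nonempty)
  rw [connDomNum, ← hcard]
  exact hbound S hS
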